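/- arXiv:cs/0309024 — 6 statements merged into one kernel-verified Lean document; each statement's English description precedes it below -/
import Mathlib

section
/- Let S be a finite set and f : E(S) → E(S) monotone, and suppose f(0)(s) = lfp(f)(s) for all s ∈ S. Then for every ε > 0, the expectation x defined by x(s) = max(lfp(f)(s) − ε, 0) satisfies x(s) ≪ f(x)(s) for all s and lfp(f) − ε ≤ x ≤ lfp(f) pointwise. -/
/-- Membership in `E(S)`: a function `S → ℝ` taking values in `[0,1]`. -/
def memE {S : Type*} (x : S → ℝ) : Prop := ∀ s, 0 ≤ x s ∧ x s ≤ 1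

/-- `L` is the least (pre-)fixed point of `f` within `E(S)` (Knaster–Tarski
characterisation). -/
def IsLfp {S : Type*} (f : (S → ℝ) → (S → ℝ)) (L : S → ℝ) : Prop :=
  memE L ∧ f L = L ∧ ∀ y, memE y → f y ≤ y → L ≤ y

/-- base case of Everett-style approximation.  If the termination set is
all of `S` (i.e. `f 0 = lfp f` everywhere), then for any `ε > 0` the expectation
`x s = max (lfp f s - ε) 0` satisfies `x ≪ f x` pointwise and
`lfp f - ε ≤ x ≤ lfp f` pointwise. -/
theorem stmt5 {S : Type*} [Fintype S] (f : (S → ℝ) → (S → ℝ)) (L : S → ℝ)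
    (hE : ∀ x, memE x → memE (f x))
    (hmono : ∀ x y, memE x → memE y → x ≤ y → f x ≤ f y)
    (hL : IsLfp f L)
    (hbase : ∀ s, f (fun _ => 0) s = L s)
    (ε : ℝ) (hε : 0 < ε) :
    (∀ s, 0 < max (L s - ε) 0 →
        max (L s - ε) 0 < f (fun s' => max (L s' - ε) 0) s) ∧
      (∀ s, L s - ε ≤ max (L s - ε) 0) ∧
      (∀ s, max (L s - ε) 0 ≤ L s) := by
  obtain ⟨hLE, hfix, hleast⟩ := hL
  set x : S → ℝ := fun s' => max (L s' - ε) 0 with hx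
  have hxE : memE x := fun s => ⟨le_max_right _ _,
    max_le (by linarith [(hLE s).2, hε.le]) zero_le_one⟩
  have h0E : memE (fun _ : S => (0 : ℝ)) := fun _ => ⟨le_rfl, zero_le_one⟩
  have hxL : x ≤ L := fun s => max_le (by linarith) (hLE s).1
  have h0x : (fun _ : S => (0 : ℝ)) ≤ x := fun s => le_max_right _ _
  have h1 : f (fun _ : S => 0) ≤ f x := hmono _ _ h0E hxE h0x
  have h2 : f x ≤ f L := hmono _ _ hxE hLE hxL
  have hfx : ∀ s, f x s = L s := by
    intro s
    have := h1 s
    have := h2 s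
    rw [hfix] at h2
    have := h2 s
    have hb := hbase s
    linarith [h1 s]
  refine ⟨?_, fun s => le_max_left _ _, hxL⟩
  intro s hs
  have : max (L s - ε) 0 = L s - ε := by
    rcases max_cases (L s - ε) (0:ℝ) with ⟨h,_⟩|⟨h,_⟩
    · exact h
    · rw [h] at hs; linarith
  rw [this, hfx s]
  rw [this] at hs
  linarith
end

section
/- Let S be a finite set, f : E(S) → E(S) monotone and continuous (with respect to pointwise convergence), and ε > 0. Then there exists x ∈ E(S) such that x ≪ f(x) pointwise and lfp(f)(s) − ε ≤ x(s) for every s ∈ S. -/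
open Filter Topology

/-- Everett's lemma, Lemma `l1234`: for a monotone, continuous `f` on
`E(S)` with `S` finite and any `ε > 0` there is an `x ∈ E(S)` with `x ≪ f x`
pointwise and `lfp f - ε ≤ x` pointwise. -/
theorem stmt6 {S : Type*} [Fintype S] (f : (S → ℝ) → (S → ℝ)) (L : S → ℝ)
    (hE : ∀ x, memE x → memE (f x))
    (hmono : ∀ x y, memE x → memE y → x ≤ y → f x ≤ f y)
    (hcont : ∀ (u : ℕ → S → ℝ), (∀ n, memE (u n)) → ∀ x, memE x →
      (∀ s, Tendsto (fun n => u n s) atTop (𝓝 (x s))) →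
      ∀ s, Tendsto (fun n => f (u n) s) atTop (𝓝 (f x s)))
    (hL : IsLfp f L)
    (ε : ℝ) (hε : 0 < ε) :
    ∃ x, memE x ∧ (∀ s, 0 < x s → x s < f x s) ∧ ∀ s, L s - ε ≤ x s := by
  classical
  obtain ⟨hLmem, hLfix, hLleast⟩ := hL
  -- the clipped function and its iteration from 0
  set g : ℝ → (S → ℝ) → (S → ℝ) := fun δ x s => max (f x s - δ) 0 with hg
  set v : ℝ → ℕ → (S → ℝ) := fun δ n => (g δ)^[n] (fun _ => 0) with hv
  have hv0 : ∀ δ, v δ 0 = fun _ => 0 := fun δ => rfl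
  have hvs : ∀ δ n, v δ (n + 1) = g δ (v δ n) := by
    intro δ n; simp only [hv, Function.iterate_succ_apply']
  have hgmem : ∀ δ, 0 ≤ δ → ∀ x, memE x → memE (g δ x) := by
    intro δ hδ x hx s
    refine ⟨le_max_right _ _, ?_⟩
    have h1 := (hE x hx s).1
    have h2 := (hE x hx s).2
    exact max_le (by linarith) (by linarith)
  have hvmem : ∀ δ, 0 ≤ δ → ∀ n, memE (v δ n) := by
    intro δ hδ n
    induction n with
    | zero => intro s; rw [hv0]; exact ⟨le_rfl, zero_le_one⟩
    | succ n ih => rw [hvs]; exact hgmem δ hδ _ ih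
  have hgmono : ∀ δ x y, memE x → memE y → x ≤ y → g δ x ≤ g δ y := by
    intro δ x y hx hy hxy s
    exact max_le_max (sub_le_sub_right (hmono x y hx hy hxy s) δ) le_rfl
  have hvL : ∀ δ, 0 ≤ δ → ∀ n, v δ n ≤ L := by
    intro δ hδ n
    induction n with
    | zero => intro s; rw [hv0]; exact (hLmem s).1
    | succ n ih =>
      intro s
      rw [hvs]
      have h1 : f (v δ n) s ≤ f L s := hmono _ _ (hvmem δ hδ n) hLmem ih s
      have h2 : f L s = L s := congrFun hLfix s
      have h0 := (hLmem s).1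
      exact max_le (by linarith) (by linarith)
  have hvmonon : ∀ δ, 0 ≤ δ → ∀ s, Monotone fun n => v δ n s := by
    intro δ hδ s
    apply monotone_nat_of_le_succ
    intro n
    have : ∀ m, v δ m ≤ v δ (m + 1) := by
      intro m
      induction m with
      | zero => intro t; rw [hv0, hvs, hv0]; exact le_max_right _ _
      | succ m ih =>
        rw [hvs, hvs]
        exact hgmono δ _ _ (hvmem δ hδ m) (hvmem δ hδ (m + 1)) ih
    exact this n s
  have hvanti : ∀ δ δ', 0 ≤ δ' → δ' ≤ δ → ∀ n, v δ n ≤ v δ' n := by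
    intro δ δ' hδ' hδδ n
    induction n with
    | zero => intro s; rw [hv0 δ, hv0 δ']
    | succ n ih =>
      intro s
      rw [hvs, hvs]
      have h1 : f (v δ n) s ≤ f (v δ' n) s :=
        hmono _ _ (hvmem δ (hδ'.trans hδδ) n) (hvmem δ' hδ' n) ih s
      exact max_le_max (by linarith) le_rfl
  -- the limit of the clipped iteration
  set LD : ℝ → S → ℝ := fun δ s => ⨆ n, v δ n s with hLD
  have hbdd : ∀ δ, 0 ≤ δ → ∀ s, BddAbove (Set.range fun n => v δ n s) := by
    intro δ hδ s
    exact ⟨1, by rintro y ⟨n, rfl⟩; exact (hvmem δ hδ n s).2⟩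
  have htendv : ∀ δ, 0 ≤ δ → ∀ s,
      Tendsto (fun n => v δ n s) atTop (𝓝 (LD δ s)) := by
    intro δ hδ s
    exact tendsto_atTop_ciSup (hvmonon δ hδ s) (hbdd δ hδ s)
  have hLDmem : ∀ δ, 0 ≤ δ → memE (LD δ) := by
    intro δ hδ s
    constructor
    · have := le_ciSup (hbdd δ hδ s) 0
      simpa [hv0] using this
    · exact ciSup_le fun n => (hvmem δ hδ n s).2
  have hLDleL : ∀ δ, 0 ≤ δ → ∀ s, LD δ s ≤ L s := by
    intro δ hδ s
    exact ciSup_le fun n => hvL δ hδ n s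
  have hfixδ : ∀ δ, 0 ≤ δ → ∀ s, max (f (LD δ) s - δ) 0 = LD δ s := by
    intro δ hδ s
    have h1 : Tendsto (fun n => f (v δ n) s) atTop (𝓝 (f (LD δ) s)) :=
      hcont (v δ) (hvmem δ hδ) (LD δ) (hLDmem δ hδ) (htendv δ hδ) s
    have h2 : Tendsto (fun n => max (f (v δ n) s - δ) 0) atTop
        (𝓝 (max (f (LD δ) s - δ) 0)) :=
      (h1.sub_const δ).max tendsto_const_nhds
    have h3 : (fun n => max (f (v δ n) s - δ) 0) = fun n => v δ (n + 1) s := by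
      funext n; rw [hvs]
    have h4 : Tendsto (fun n => v δ (n + 1) s) atTop (𝓝 (LD δ s)) :=
      (htendv δ hδ s).comp (tendsto_add_atTop_nat 1)
    exact tendsto_nhds_unique (h3 ▸ h2) h4
  -- the sequence δ = 1/(k+1)
  set w : ℕ → S → ℝ := fun k => LD (1 / (k + 1 : ℝ)) with hw
  have hδpos : ∀ k : ℕ, (0:ℝ) < 1 / (k + 1 : ℝ) := by
    intro k
    positivity
  have hwmem : ∀ k, memE (w k) := fun k => hLDmem _ (hδpos k).le
  have hwmono : ∀ s, Monotone fun k => w k s := by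
    intro s
    apply monotone_nat_of_le_succ
    intro k
    refine ciSup_le fun n => ?_
    have hle : v (1 / (k + 1 : ℝ)) n ≤ v (1 / (k + 2 : ℝ)) n := by
      apply hvanti _ _ (by positivity)
      apply one_div_le_one_div_of_le (by positivity)
      linarith
    calc v (1 / (k + 1 : ℝ)) n s ≤ v (1 / (k + 2 : ℝ)) n s := hle s
      _ ≤ w (k + 1) s := by
          have : ((k:ℝ) + 1 + 1) = (k + 2 : ℝ) := by ring
          rw [hw]
          push_cast
          rw [this]
          exact le_ciSup (hbdd _ (by positivity) s) n
  have hbddw : ∀ s, BddAbove (Set.range fun k => w k s) :=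
    fun s => ⟨1, by rintro y ⟨k, rfl⟩; exact (hwmem k s).2⟩
  set W : S → ℝ := fun s => ⨆ k, w k s with hW
  have htendw : ∀ s, Tendsto (fun k => w k s) atTop (𝓝 (W s)) :=
    fun s => tendsto_atTop_ciSup (hwmono s) (hbddw s)
  have hWmem : memE W := by
    intro s
    constructor
    · exact le_trans (hwmem 0 s).1 (le_ciSup (hbddw s) 0)
    · exact ciSup_le fun k => (hwmem k s).2
  have hfW : f W ≤ W := by
    intro s
    have h1 : Tendsto (fun k => f (w k) s) atTop (𝓝 (f W s)) :=
      hcont w hwmem W hWmem htendw s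
    have h2 : Tendsto (fun k => w k s + 1 / (k + 1 : ℝ)) atTop (𝓝 (W s)) := by
      have := (htendw s).add tendsto_one_div_add_atTop_nhds_zero_nat
      simpa using this
    refine le_of_tendsto_of_tendsto' h1 h2 ?_
    intro k
    have := hfixδ _ (hδpos k).le s
    have hle : f (w k) s - 1 / (k + 1 : ℝ) ≤ max (f (w k) s - 1 / (k + 1 : ℝ)) 0 :=
      le_max_left _ _
    rw [this] at hle
    linarith
  have hLW : ∀ s, L s ≤ W s := hLleast W hWmem hfW
  have hWL : ∀ s, W s ≤ L s := fun s => ciSup_le fun k => hLDleL _ (hδpos k).le s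
  -- choose k large enough
  have hex : ∀ s, ∃ k, L s - ε < w k s := by
    intro s
    have h1 : L s - ε < W s := by
      have := hLW s
      linarith
    rw [hW] at h1
    exact (lt_ciSup_iff (hbddw s)).mp h1
  choose ks hks using hex
  set K := Finset.univ.sup ks with hK
  refine ⟨w K, hwmem K, ?_, ?_⟩
  · intro s hs
    have hfix := hfixδ _ (hδpos K).le s
    have heq : f (w K) s - 1 / (K + 1 : ℝ) = w K s := by
      rcases le_or_gt (f (w K) s - 1 / (K + 1 : ℝ)) 0 with h | h
      · rw [max_eq_right h] at hfix
        exact absurd hfix (ne_of_lt hs)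
      · rw [max_eq_left h.le] at hfix
        exact hfix
    have := hδpos K
    linarith
  · intro s
    have h1 : ks s ≤ K := Finset.le_sup (Finset.mem_univ s)
    have h2 : w (ks s) s ≤ w K s := hwmono s h1
    have := hks s
    linarith
end

section
/- Call f : E(S) → E(S) 'ok' if for every x ∈ E(S) with x ≪ f(x) pointwise, one has x ≤ lfp(f). Call f 'almost-linear' if f(x) = w + g(x) for some fixed w ∈ E(S) and some g : E(S) → E(S) that is linear (g(a·x + b·y) = a·g(x) + b·g(y) for nonnegative scalars whenever the combinations stay in E(S)) and monotone, with w + g(x) ∈ E(S) for all x. Then, over a finite state space S, every almost-linear f is ok. -/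
/-- Lemma `l1228`: over a finite state space, every almost-linear
`f = w + g` (with `g` linear over nonnegative combinations staying in `E` and
monotone) is `ok`: whenever `x ≪ f x` pointwise we have `x ≤ lfp f`. -/
theorem stmt7 {S : Type*} [Fintype S]
    (f : (S → ℝ) → (S → ℝ)) (w : S → ℝ) (g : (S → ℝ) → (S → ℝ))
    (hf : ∀ x s, f x s = w s + g x s)
    (hw : memE w)
    (hglin : ∀ a b : ℝ, 0 ≤ a → 0 ≤ b → ∀ x y, memE x → memE y →
      memE (fun s => a * x s + b * y s) →
      g (fun s => a * x s + b * y s) = fun s => a * g x s + b * g y s)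
    (hgmono : ∀ x y, memE x → memE y → x ≤ y → g x ≤ g y)
    (hfE : ∀ x, memE x → memE (f x))
    (L : S → ℝ) (hL : IsLfp f L) :
    ∀ x, memE x → (∀ s, 0 < x s → x s < f x s) → x ≤ L := by
  intro x hx hlt
  by_contra hcon
  simp only [Pi.le_def, not_forall, not_le] at hcon
  obtain ⟨t, ht⟩ := hcon
  obtain ⟨hLmem, hLfix, -⟩ := hL
  obtain ⟨s0, -, hs0⟩ := Finset.exists_max_image (Finset.univ : Finset S)
    (fun s => x s - L s) ⟨t, Finset.mem_univ t⟩
  set c : ℝ := x s0 - L s0 with hc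
  have hcpos : 0 < c := lt_of_lt_of_le (by linarith) (hs0 t (Finset.mem_univ t))
  set a : ℝ := (1 + c)⁻¹ with ha
  have h1c : (0:ℝ) < 1 + c := by linarith
  have ha0 : 0 < a := inv_pos.mpr h1c
  have ha1 : a * (1 + c) = 1 := inv_mul_cancel₀ (ne_of_gt h1c)
  have hale : a ≤ 1 := by
    rw [ha]
    rw [inv_le_one_iff₀]
    right; linarith
  have hone : memE (fun _ : S => (1:ℝ)) := fun s => ⟨zero_le_one, le_refl 1⟩
  have hax : memE (fun s => a * x s) := by
    intro s
    constructor
    · exact mul_nonneg ha0.le (hx s).1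
    · calc a * x s ≤ 1 * 1 := mul_le_mul hale (hx s).2 (hx s).1 zero_le_one
        _ = 1 := one_mul 1
  -- the convex combination a*L + (c*a)*1 is in E
  have hcomb : memE (fun s => a * L s + (c * a) * (fun _ : S => (1:ℝ)) s) := by
    intro s
    simp only
    constructor
    · have := (hLmem s).1
      nlinarith
    · have := (hLmem s).2
      nlinarith [mul_nonneg ha0.le (hLmem s).1]
  -- linearity for scaling x by a
  have hzero : memE (fun _ : S => (0:ℝ)) := fun s => ⟨le_refl 0, zero_le_one⟩
  have heq : (fun s => a * x s + 0 * (fun _ : S => (0:ℝ)) s) = fun s => a * x s := by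
    funext s; ring
  have hgax : g (fun s => a * x s) = fun s => a * g x s + 0 * g (fun _ : S => (0:ℝ)) s := by
    rw [← heq]
    exact hglin a 0 ha0.le le_rfl x (fun _ => 0) hx hzero (heq ▸ hax)
  -- linearity for the convex combination
  have hgcomb : g (fun s => a * L s + (c * a) * (fun _ : S => (1:ℝ)) s)
      = fun s => a * g L s + (c * a) * g (fun _ : S => (1:ℝ)) s :=
    hglin a (c * a) ha0.le (mul_nonneg hcpos.le ha0.le) L (fun _ => 1) hLmem hone hcomb
  -- monotonicity: a*x ≤ a*L + c*a*1
  have hmle : (fun s => a * x s) ≤ (fun s => a * L s + (c * a) * (fun _ : S => (1:ℝ)) s) := by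
    intro s
    simp only
    have hd : x s - L s ≤ c := hs0 s (Finset.mem_univ s)
    nlinarith
  have hmono := hgmono _ _ hax hcomb hmle
  have key := hmono s0
  rw [hgax, hgcomb] at key
  simp only at key
  -- key : a * g x s0 + 0 * g 0 s0 ≤ a * g L s0 + c * a * g 1 s0
  have key2 : a * g x s0 ≤ a * (g L s0 + c * g (fun _ : S => (1:ℝ)) s0) := by ring_nf; ring_nf at key; linarith
  have key3 : g x s0 ≤ g L s0 + c * g (fun _ : S => (1:ℝ)) s0 :=
    le_of_mul_le_mul_left (by linarith [key2]) ha0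
  -- bound g 1 s0 ≤ 1
  have hg1 : g (fun _ : S => (1:ℝ)) s0 ≤ 1 := by
    have h := (hfE (fun _ => 1) hone s0).2
    rw [hf] at h
    have := (hw s0).1
    linarith
  -- fixed point at s0
  have hfixs0 : w s0 + g L s0 = L s0 := by
    have := congrFun hLfix s0
    rw [hf] at this
    exact this
  -- x s0 > 0, so strict increase
  have hxpos : 0 < x s0 := by
    have := (hLmem s0).1
    linarith
  have hstrict := hlt s0 hxpos
  rw [hf] at hstrict
  -- contradiction
  nlinarith [mul_le_mul_of_nonneg_left hg1 hcpos.le]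
end

section
/- Let S be finite and f : E(S) → E(S) almost-linear with kernel K := {s ∈ S : lfp(f)(s) = 0}. Then for every k ∈ K and every x ∈ E(S), f(x)(k) = f(x↓K)(k), where (x↓K)(s) = x(s) if s ∈ K and 0 otherwise (stationary zeroes: the game cannot escape the kernel). -/
/-- stationary zeroes, Lemma `l1244`: with kernel
`K = {s | lfp f s = 0}`, the almost-linear `f = w + g` cannot escape `K`:
`f x k = f (x↓K) k` for every `k ∈ K` and `x ∈ E(S)`. -/
theorem stmt9 {S : Type*} [Fintype S]
    (f : (S → ℝ) → (S → ℝ)) (w : S → ℝ) (g : (S → ℝ) → (S → ℝ))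
    (hf : ∀ x s, f x s = w s + g x s)
    (hw : memE w)
    (hgadd : ∀ x y, memE x → memE y → memE (fun s => x s + y s) →
      g (fun s => x s + y s) = fun s => g x s + g y s)
    (hghom : ∀ c : ℝ, 0 ≤ c → c ≤ 1 → ∀ x, memE x →
      g (fun s => c * x s) = fun s => c * g x s)
    (hgmono : ∀ x y, memE x → memE y → x ≤ y → g x ≤ g y)
    (L : S → ℝ) (hL : IsLfp f L) :
    ∀ x, memE x → ∀ k, L k = 0 →
      f x k = f (fun s => if L s = 0 then x s else 0) k := by
  obtain ⟨hLE, hLfix, _⟩ := hL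
  -- g of zero is zero
  have hg0 : g (fun _ => (0 : ℝ)) = fun _ => (0 : ℝ) := by
    have := hghom 0 le_rfl zero_le_one L hLE
    simpa using this
  have hgnonneg : ∀ y, memE y → ∀ s, 0 ≤ g y s := by
    intro y hy s
    have h0 : memE (fun _ : S => (0 : ℝ)) := by intro s; exact ⟨le_rfl, zero_le_one⟩
    have := hgmono _ y h0 hy (fun s => (hy s).1)
    have := this s
    simpa [hg0] using this
  intro x hx k hk
  set x1 : S → ℝ := fun s => if L s = 0 then x s else 0 with hx1
  set x2 : S → ℝ := fun s => if L s = 0 then 0 else x s with hx2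
  have hx1E : memE x1 := by
    intro s; by_cases h : L s = 0 <;> simp [hx1, h, hx s, (hx s).1, (hx s).2]
  have hx2E : memE x2 := by
    intro s; by_cases h : L s = 0 <;> simp [hx2, h, hx s, (hx s).1, (hx s).2]
  have hsum : (fun s => x1 s + x2 s) = x := by
    funext s; by_cases h : L s = 0 <;> simp [hx1, hx2, h]
  have hsumE : memE (fun s => x1 s + x2 s) := by rw [hsum]; exact hx
  have hadd : g x k = g x1 k + g x2 k := by
    have := hgadd x1 x2 hx1E hx2E hsumE
    rw [hsum] at this
    exact congrFun this k
  -- g L k = 0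
  have hgLk : g L k = 0 := by
    have : w k + g L k = 0 := by
      rw [← hf L k, hLfix]; exact hk
    have h1 := (hw k).1
    have h2 := hgnonneg L hLE k
    linarith
  -- show g x2 k = 0
  have hgx2 : g x2 k = 0 := by
    by_cases hall : ∀ s, L s = 0
    · have : x2 = fun _ => 0 := by funext s; simp [hx2, hall s]
      rw [this, hg0]
    · push_neg at hall
      obtain ⟨s0, hs0⟩ := hall
      set T : Finset S := Finset.univ.filter (fun s => L s ≠ 0) with hT
      have hTne : T.Nonempty := ⟨s0, by simp [hT, hs0]⟩
      set c : ℝ := min 1 (T.inf' hTne L) with hc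
      have hcpos : 0 < c := by
        apply lt_min one_pos
        rw [Finset.lt_inf'_iff]
        intro s hs
        have : L s ≠ 0 := by simpa [hT] using hs
        exact lt_of_le_of_ne (hLE s).1 (Ne.symm this)
      have hc1 : c ≤ 1 := min_le_left _ _
      have hle : (fun s => c * x2 s) ≤ L := by
        intro s
        by_cases h : L s = 0
        · simp [hx2, h]
        · have hcs : c ≤ L s := le_trans (min_le_right _ _)
            (Finset.inf'_le L (by simp [hT, h]))
          have : c * x2 s ≤ c * 1 := by
            apply mul_le_mul_of_nonneg_left (hx2E s).2 hcpos.le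
          simpa using this.trans (by linarith)
      have hcx2E : memE (fun s => c * x2 s) := by
        intro s
        constructor
        · exact mul_nonneg hcpos.le (hx2E s).1
        · calc c * x2 s ≤ 1 * 1 := mul_le_mul hc1 (hx2E s).2 (hx2E s).1 one_pos.le
            _ = 1 := by ring
      have hmono := hgmono _ L hcx2E hLE hle k
      rw [hghom c hcpos.le hc1 x2 hx2E] at hmono
      have hmono' : c * g x2 k ≤ g L k := hmono
      have h2 := hgnonneg x2 hx2E k
      nlinarith [hmono', hgLk]
  rw [hf x k, hf x1 k, hadd, hgx2]
  ring
end

section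
/- Let S be finite and f : E(S) → E(S) almost-linear with kernel K = {s : lfp(f)(s) = 0}. If x ∈ E(S) satisfies x ≪ f(x) pointwise, then x(k) = 0 for every k ∈ K. -/
/-- Lemma `l1304`: for an almost-linear `f = w + g` (with `g` linear,
monotone, one-bounded) with kernel `K = {s | lfp f s = 0}`, if `x ≪ f x` pointwise
then `x` vanishes on `K`. -/
theorem stmt10 {S : Type*} [Fintype S]
    (f : (S → ℝ) → (S → ℝ)) (w : S → ℝ) (g : (S → ℝ) → (S → ℝ))
    (hf : ∀ x s, f x s = w s + g x s)
    (hw : memE w)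
    (hgadd : ∀ x y, memE x → memE y → memE (fun s => x s + y s) →
      g (fun s => x s + y s) = fun s => g x s + g y s)
    (hghom : ∀ c : ℝ, 0 ≤ c → c ≤ 1 → ∀ x, memE x →
      g (fun s => c * x s) = fun s => c * g x s)
    (hgmono : ∀ x y, memE x → memE y → x ≤ y → g x ≤ g y)
    (hgbound : ∀ x, memE x → ∀ s, g x s ≤ ⨆ s', x s')
    (L : S → ℝ) (hL : IsLfp f L) :
    ∀ x, memE x → (∀ s, 0 < x s → x s < f x s) →
      ∀ k, L k = 0 → x k = 0 := by
  classical
  obtain ⟨hLmem, hLfix, _⟩ := hL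
  intro x hx hstrict k hk
  by_contra hxk
  have hxk' : 0 < x k := lt_of_le_of_ne (hx k).1 (Ne.symm hxk)
  -- basic facts
  have mem0 : memE (fun _ : S => (0:ℝ)) := fun s => ⟨le_rfl, zero_le_one⟩
  have g0 : g (fun _ : S => (0:ℝ)) = fun _ => 0 := by
    have h := hghom 0 le_rfl zero_le_one (fun _ => 0) mem0
    have h1 : (fun s : S => (0:ℝ) * (fun _ : S => (0:ℝ)) s) = fun _ : S => (0:ℝ) := by
      funext s; ring
    rw [h1] at h
    rw [h]; funext s; ring
  have gnonneg : ∀ z, memE z → ∀ s, 0 ≤ g z s := by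
    intro z hz s
    have := hgmono (fun _ => 0) z mem0 hz (fun s => (hz s).1) s
    rw [g0] at this; exact this
  -- on the kernel, w = 0 and g L = 0
  have hker : ∀ s, L s = 0 → w s = 0 ∧ g L s = 0 := by
    intro s hs
    have h1 : w s + g L s = 0 := by
      have := hf L s
      rw [hLfix] at this
      linarith [this, hs]
    have h2 : 0 ≤ w s := (hw s).1
    have h3 : 0 ≤ g L s := gnonneg L hLmem s
    constructor <;> linarith
  -- maximizer of x over the kernel
  have hKne : (Finset.univ.filter (fun s => L s = 0)).Nonempty :=
    ⟨k, by simp [hk]⟩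
  obtain ⟨k₀, hk₀mem, hk₀max⟩ := Finset.exists_max_image _ x hKne
  have hk₀ : L k₀ = 0 := by simpa using hk₀mem
  have hk₀max' : ∀ s, L s = 0 → x s ≤ x k₀ := by
    intro s hs; exact hk₀max s (by simp [hs])
  set m := x k₀ with hm
  have hm0 : 0 < m := lt_of_lt_of_le hxk' (hk₀max' k hk)
  have hm1 : m ≤ 1 := (hx k₀).2
  -- indicators
  set χK : S → ℝ := fun s => if L s = 0 then 1 else 0 with hχK
  set χC : S → ℝ := fun s => if L s = 0 then 0 else 1 with hχC
  have hχKmem : memE χK := by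
    intro s; simp only [hχK]; split <;> norm_num
  have hχCmem : memE χC := by
    intro s; simp only [hχC]; split <;> norm_num
  have hmχKmem : memE (fun s => m * χK s) := by
    intro s; simp only [hχK]; split
    · constructor <;> simp <;> linarith
    · constructor <;> simp <;> linarith
  -- g χC vanishes at k₀
  have hgχC : g χC k₀ = 0 := by
    by_cases hC : ∀ s, L s = 0
    · have : χC = fun _ => 0 := by funext s; simp [hχC, hC s]
      rw [this, g0]
    · push_neg at hC
      obtain ⟨s₁, hs₁⟩ := hC
      have hCne : (Finset.univ.filter (fun s => L s ≠ 0)).Nonempty :=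
        ⟨s₁, by simp [hs₁]⟩
      obtain ⟨s₀, hs₀mem, hs₀min⟩ := Finset.exists_min_image _ L hCne
      have hs₀ : L s₀ ≠ 0 := by simpa using hs₀mem
      set δ := L s₀ with hδ
      have hδ0 : 0 < δ := lt_of_le_of_ne (hLmem s₀).1 (Ne.symm hs₀)
      have hδ1 : δ ≤ 1 := (hLmem s₀).2
      have hδmin : ∀ s, L s ≠ 0 → δ ≤ L s := by
        intro s hs; exact hs₀min s (by simp [hs])
      have huL : (fun s => δ * χC s) ≤ L := by
        intro s; simp only [hχC]
        by_cases hs : L s = 0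
        · simp [hs]
        · rw [if_neg hs, mul_one]; exact hδmin s hs
      have hgu : g (fun s => δ * χC s) k₀ = 0 := by
        have hle := hgmono _ L (fun s => by
          constructor
          · exact mul_nonneg hδ0.le (hχCmem s).1
          · calc δ * χC s ≤ 1 * 1 := by
                  apply mul_le_mul hδ1 (hχCmem s).2 (hχCmem s).1 zero_le_one
                _ = 1 := one_mul 1) hLmem huL k₀
        have hge := gnonneg (fun s => δ * χC s) (fun s =>
          ⟨mul_nonneg hδ0.le (hχCmem s).1, by
            calc δ * χC s ≤ 1 * 1 := by
                  apply mul_le_mul hδ1 (hχCmem s).2 (hχCmem s).1 zero_le_one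
              _ = 1 := one_mul 1⟩) k₀
        have hgL0 : g L k₀ = 0 := (hker k₀ hk₀).2
        linarith [hle, hge, hgL0.le]
      have := hghom δ hδ0.le hδ1 χC hχCmem
      rw [this] at hgu
      have : δ * g χC k₀ = 0 := hgu
      exact (mul_eq_zero.mp this).resolve_left (ne_of_gt hδ0)
  -- the dominating function y
  set y : S → ℝ := fun s => m * χK s + χC s with hy
  have hymem : memE y := by
    intro s; simp only [hy, hχK, hχC]
    by_cases hs : L s = 0 <;> simp [hs] <;> constructor <;> linarith
  have hxy : x ≤ y := by
    intro s; simp only [hy, hχK, hχC]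
    by_cases hs : L s = 0
    · simp only [hs, if_pos rfl, mul_one, if_pos]
      simpa using hk₀max' s hs
    · simp only [if_neg hs, mul_zero, zero_add]
      exact (hx s).2
  -- compute g y k₀
  have hgyadd : g y = fun s => g (fun s => m * χK s) s + g χC s :=
    hgadd _ _ hmχKmem hχCmem hymem
  have hghomm : g (fun s => m * χK s) = fun s => m * g χK s :=
    hghom m hm0.le hm1 χK hχKmem
  have hgχKbd : g χK k₀ ≤ 1 := by
    have h1 := hgbound χK hχKmem k₀
    have h2 : (⨆ s', χK s') ≤ 1 := by
      have : Nonempty S := ⟨k₀⟩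
      apply ciSup_le
      intro s; exact (hχKmem s).2
    linarith
  have hgy : g y k₀ ≤ m := by
    rw [hgyadd]
    simp only
    rw [hghomm]
    simp only
    rw [hgχC]
    have : m * g χK k₀ ≤ m * 1 := by
      apply mul_le_mul_of_nonneg_left hgχKbd hm0.le
    linarith
  -- contradiction
  have hstr : m < f x k₀ := hstrict k₀ hm0
  have hfx : f x k₀ = w k₀ + g x k₀ := hf x k₀
  have hw0 : w k₀ = 0 := (hker k₀ hk₀).1
  have hgx : g x k₀ ≤ g y k₀ := hgmono x y hx hymem hxy k₀
  linarith
end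

section
/- Let S be a finite set and f : E(S) → E(S) monotone, and suppose there is a finite set G of monotone functions fᵍ : E(S) → E(S), each with fᵍ ≤ f pointwise (i.e. fᵍ(x) ≤ f(x) for all x), such that for every ε > 0 there exists g ∈ G with lfp(f) − ε ≤ lfp(fᵍ) pointwise. Then there exists g ∈ G with lfp(fᵍ) = lfp(f). -/
instance : Fact ((0:ℝ) ≤ 1) := ⟨zero_le_one⟩

/-- over a finite state space, if a finite family `G` of monotone
functions below `f` approximates `lfp f` within every `ε > 0`, then some member of
`G` attains `lfp f` exactly. -/
theorem stmt18 {S : Type*} [Fintype S]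
    (f : (S → unitInterval) →o (S → unitInterval))
    (G : Set ((S → unitInterval) →o (S → unitInterval))) (hGfin : G.Finite)
    (hle : ∀ g ∈ G, ∀ x, g x ≤ f x)
    (happrox : ∀ ε : ℝ, 0 < ε → ∃ g ∈ G, ∀ s,
      (OrderHom.lfp f s : ℝ) - ε ≤ (OrderHom.lfp g s : ℝ)) :
    ∃ g ∈ G, OrderHom.lfp g = OrderHom.lfp f := by
  obtain ⟨g₀, hg₀, -⟩ := happrox 1 one_pos
  by_contra hcon
  push_neg at hcon
  cases isEmpty_or_nonempty S with
  | inl h =>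
    exact hcon g₀ hg₀ (funext fun s => isEmptyElim s)
  | inr h =>
    have hTne : hGfin.toFinset.Nonempty := ⟨g₀, hGfin.mem_toFinset.2 hg₀⟩
    set d : ((S → unitInterval) →o (S → unitInterval)) → ℝ := fun g =>
      Finset.univ.sup' Finset.univ_nonempty
        (fun s => (OrderHom.lfp f s : ℝ) - (OrderHom.lfp g s : ℝ)) with hd
    have hdpos : ∀ g ∈ G, 0 < d g := by
      intro g hg
      have hle' : OrderHom.lfp g ≤ OrderHom.lfp f :=
        OrderHom.lfp.monotone (fun x => hle g hg x)
      obtain ⟨s, hs⟩ : ∃ s, OrderHom.lfp g s ≠ OrderHom.lfp f s := by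
        by_contra hcc; push_neg at hcc; exact hcon g hg (funext hcc)
      have hlt : (OrderHom.lfp g s : ℝ) < (OrderHom.lfp f s : ℝ) := by
        have h1 : (OrderHom.lfp g s : ℝ) ≤ (OrderHom.lfp f s : ℝ) := hle' s
        have h2 : (OrderHom.lfp g s : ℝ) ≠ (OrderHom.lfp f s : ℝ) := by
          exact fun hh => hs (Subtype.ext hh)
        exact lt_of_le_of_ne h1 h2
      calc (0:ℝ) < (OrderHom.lfp f s : ℝ) - (OrderHom.lfp g s : ℝ) := by linarith
        _ ≤ d g := Finset.le_sup' (fun s => (OrderHom.lfp f s : ℝ) - (OrderHom.lfp g s : ℝ)) (Finset.mem_univ s)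
    set ε := hGfin.toFinset.inf' hTne d with hε
    have hεpos : 0 < ε := by
      rw [hε, Finset.lt_inf'_iff]
      exact fun g hg => hdpos g (hGfin.mem_toFinset.1 hg)
    obtain ⟨g, hg, hgs⟩ := happrox (ε / 2) (by linarith)
    have h1 : d g ≤ ε / 2 := by
      refine Finset.sup'_le _ _ fun s _ => ?_
      have := hgs s; linarith
    have h2 : ε ≤ d g := Finset.inf'_le _ (hGfin.mem_toFinset.2 hg)
    linarith
end
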